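/- arXiv:2002.09553 — 2 statements merged into one kernel-verified Lean document; each statement's English description precedes it below -/
import Mathlib

section
/- In the channel model with Markov encoders, for every 1 ≤ t ≤ n, every w ∈ 𝒲 and every z_{1:t} ∈ 𝒵^t with P(W = w, Z_{1:t} = z_{1:t}) > 0, let u_t ∈ 𝒰 be the memory determined deterministically by (w, z_{1:t-1}) via u₁ and the recursion u_{s+1} = G²(u_s, φ_s, z_s, w), and let β_{t-1}(y_{1:t-1}) := P(Y_{1:t-1} = y_{1:t-1} | W = w, Z_{1:t-1} = z_{1:t-1}). Then the sender's conditional belief over receiver observation histories satisfies β_t(y_{1:t}) := P(Y_{1:t} = y_{1:t} | W = w, Z_{1:t} = z_{1:t}) = [β_{t-1}(y_{1:t-1}) · Q^f(y_t | φ_t(w,u_t)) · Q^b(z_t | y_t)] / [Σ_{ỹ_{1:t}} β_{t-1}(ỹ_{1:t-1}) · Q^f(ỹ_t | φ_t(w,u_t)) · Q^b(z_t | ỹ_t)]. In particular this update depends only on β_{t-1}, φ_t, z_t, u_t and w. -/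
open scoped ENNReal Classical
open Finset

namespace NoisyFeedback

variable {W X Y Z U : Type*}

/-- Memory evolution: `mem G2 u1 φ w t zs` is the sender's memory after having
observed the feedback symbols `zs = z_{1:t}`. -/
def mem (G2 : U → (W × U → X) → Z → W → U) (u1 : U) (φ : ℕ → W × U → X) (w : W) :
    (t : ℕ) → (Fin t → Z) → U
  | 0, _ => u1
  | t + 1, zs => G2 (mem G2 u1 φ w t (Fin.init zs)) (φ t) (zs (Fin.last t)) w

variable [Fintype W] [Fintype X] [Fintype Y] [Fintype Z] [Fintype U]

/-- Joint pmf `P(W = w, Y_{1:t} = ys, Z_{1:t} = zs)` of the channel model with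
Markov encoders `φ`. -/
noncomputable def jointP (Qf : X → PMF Y) (Qb : Y → PMF Z)
    (G2 : U → (W × U → X) → Z → W → U) (u1 : U) (φ : ℕ → W × U → X)
    (t : ℕ) (w : W) (ys : Fin t → Y) (zs : Fin t → Z) : ℝ≥0∞ :=
  (Fintype.card W : ℝ≥0∞)⁻¹ *
    ∏ i : Fin t,
      Qf (φ i (w, mem G2 u1 φ w i (fun j => zs (Fin.castLE i.2.le j)))) (ys i) *
        Qb (ys i) (zs i)

/-- `P(Y_{1:t} = ys)`. -/
noncomputable def probY (Qf : X → PMF Y) (Qb : Y → PMF Z)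
    (G2 : U → (W × U → X) → Z → W → U) (u1 : U) (φ : ℕ → W × U → X)
    (t : ℕ) (ys : Fin t → Y) : ℝ≥0∞ :=
  ∑ w : W, ∑ zs : Fin t → Z, jointP Qf Qb G2 u1 φ t w ys zs

/-- `P(W = w, Y_{1:t} = ys)`. -/
noncomputable def probWY (Qf : X → PMF Y) (Qb : Y → PMF Z)
    (G2 : U → (W × U → X) → Z → W → U) (u1 : U) (φ : ℕ → W × U → X)
    (t : ℕ) (ys : Fin t → Y) (w : W) : ℝ≥0∞ :=
  ∑ zs : Fin t → Z, jointP Qf Qb G2 u1 φ t w ys zs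

/-- `P(W = w, Z_{1:t} = zs)`. -/
noncomputable def probWZ (Qf : X → PMF Y) (Qb : Y → PMF Z)
    (G2 : U → (W × U → X) → Z → W → U) (u1 : U) (φ : ℕ → W × U → X)
    (t : ℕ) (w : W) (zs : Fin t → Z) : ℝ≥0∞ :=
  ∑ ys : Fin t → Y, jointP Qf Qb G2 u1 φ t w ys zs

/-- `P(W = w, U_{t+1} = u, Y_{1:t} = ys)` (memory after `t` feedback symbols). -/
noncomputable def probWUY (Qf : X → PMF Y) (Qb : Y → PMF Z)
    (G2 : U → (W × U → X) → Z → W → U) (u1 : U) (φ : ℕ → W × U → X)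
    (t : ℕ) (ys : Fin t → Y) (w : W) (u : U) : ℝ≥0∞ :=
  ∑ zs : Fin t → Z,
    if mem G2 u1 φ w t zs = u then jointP Qf Qb G2 u1 φ t w ys zs else 0


set_option linter.unusedSectionVars false in
lemma jointP_succ (Qf : X → PMF Y) (Qb : Y → PMF Z)
    (G2 : U → (W × U → X) → Z → W → U) (u1 : U) (φ : ℕ → W × U → X)
    (t : ℕ) (w : W) (ys : Fin (t+1) → Y) (zs : Fin (t+1) → Z) :
    jointP Qf Qb G2 u1 φ (t+1) w ys zs =
      jointP Qf Qb G2 u1 φ t w (Fin.init ys) (Fin.init zs) *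
        (Qf (φ t (w, mem G2 u1 φ w t (Fin.init zs))) (ys (Fin.last t)) *
         Qb (ys (Fin.last t)) (zs (Fin.last t))) := by
  unfold jointP
  rw [Fin.prod_univ_castSucc, ← mul_assoc]
  rfl

set_option linter.unusedSectionVars false in
lemma jointP_ne_top [Nonempty W] (Qf : X → PMF Y) (Qb : Y → PMF Z)
    (G2 : U → (W × U → X) → Z → W → U) (u1 : U) (φ : ℕ → W × U → X)
    (t : ℕ) (w : W) (ys : Fin t → Y) (zs : Fin t → Z) :
    jointP Qf Qb G2 u1 φ t w ys zs ≠ ∞ := by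
  unfold jointP
  apply ENNReal.mul_ne_top
  · simp [Fintype.card_ne_zero]
  · refine (ENNReal.prod_lt_top fun i _ => ?_).ne
    exact (ENNReal.mul_ne_top (PMF.apply_ne_top _ _) (PMF.apply_ne_top _ _)).lt_top

/-- **Policy-independent update of the sender's belief over receiver observation
histories** (Statement 5).  With `β_{t-1}(y_{1:t-1}) = P(Y_{1:t-1} = y_{1:t-1} | W = w,
Z_{1:t-1} = z_{1:t-1})` and `u_t` the memory determined deterministically by
`(w, z_{1:t-1})`, the belief `β_t` depends only on `β_{t-1}`, `φ_t`, `z_t`, `u_t`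
and `w`. -/
theorem sender_belief_update [Nonempty W] [Nonempty X] [Nonempty Y] [Nonempty Z] [Nonempty U]
    (Qf : X → PMF Y) (Qb : Y → PMF Z)
    (G2 : U → (W × U → X) → Z → W → U) (u1 : U) (φ : ℕ → W × U → X)
    (n t : ℕ) (ht : t + 1 ≤ n) (w : W) (zs : Fin (t + 1) → Z)
    (hpos : 0 < probWZ Qf Qb G2 u1 φ (t + 1) w zs)
    (ys : Fin (t + 1) → Y) :
    jointP Qf Qb G2 u1 φ (t + 1) w ys zs / probWZ Qf Qb G2 u1 φ (t + 1) w zs =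
      ((jointP Qf Qb G2 u1 φ t w (Fin.init ys) (Fin.init zs) /
            probWZ Qf Qb G2 u1 φ t w (Fin.init zs)) *
          Qf (φ t (w, mem G2 u1 φ w t (Fin.init zs))) (ys (Fin.last t)) *
          Qb (ys (Fin.last t)) (zs (Fin.last t))) /
        ∑ ys' : Fin (t + 1) → Y,
          (jointP Qf Qb G2 u1 φ t w (Fin.init ys') (Fin.init zs) /
              probWZ Qf Qb G2 u1 φ t w (Fin.init zs)) *
            Qf (φ t (w, mem G2 u1 φ w t (Fin.init zs))) (ys' (Fin.last t)) *
            Qb (ys' (Fin.last t)) (zs (Fin.last t)) := by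
  set D := probWZ Qf Qb G2 u1 φ t w (Fin.init zs) with hD
  set S := probWZ Qf Qb G2 u1 φ (t + 1) w zs with hS
  set A : (Fin (t+1) → Y) → ℝ≥0∞ := fun ys' => jointP Qf Qb G2 u1 φ (t+1) w ys' zs with hA
  have hfac : ∀ ys' : Fin (t+1) → Y, A ys' =
      jointP Qf Qb G2 u1 φ t w (Fin.init ys') (Fin.init zs) *
        (Qf (φ t (w, mem G2 u1 φ w t (Fin.init zs))) (ys' (Fin.last t)) *
         Qb (ys' (Fin.last t)) (zs (Fin.last t))) :=
    fun ys' => jointP_succ Qf Qb G2 u1 φ t w ys' zs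
  have hSsum : S = ∑ ys' : Fin (t+1) → Y, A ys' := rfl
  have hDtop : D ≠ ∞ := by
    rw [hD, probWZ]
    exact (ENNReal.sum_lt_top.mpr (fun ys0 _ =>
      (jointP_ne_top Qf Qb G2 u1 φ t w ys0 (Fin.init zs)).lt_top)).ne
  have hD0 : D ≠ 0 := by
    intro h
    apply hpos.ne'
    rw [hD, probWZ] at h
    have hz := Finset.sum_eq_zero_iff.mp h
    rw [hSsum]
    apply Finset.sum_eq_zero
    intro ys' _
    rw [hfac, hz (Fin.init ys') (Finset.mem_univ _), zero_mul]
  have hterm : ∀ ys' : Fin (t+1) → Y,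
      (jointP Qf Qb G2 u1 φ t w (Fin.init ys') (Fin.init zs) / D) *
        Qf (φ t (w, mem G2 u1 φ w t (Fin.init zs))) (ys' (Fin.last t)) *
        Qb (ys' (Fin.last t)) (zs (Fin.last t)) = A ys' * D⁻¹ := by
    intro ys'
    rw [hfac, div_eq_mul_inv]
    ring
  calc A ys / S
      = (A ys * D⁻¹) / (S * D⁻¹) := by
        rw [div_eq_mul_inv, div_eq_mul_inv,
          ENNReal.mul_inv (Or.inr (ENNReal.inv_ne_top.mpr hD0))
            (Or.inr (ENNReal.inv_ne_zero.mpr hDtop)), inv_inv]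
        calc A ys * S⁻¹ = A ys * S⁻¹ * (D⁻¹ * D) := by
              rw [ENNReal.inv_mul_cancel hD0 hDtop, mul_one]
          _ = A ys * D⁻¹ * (S⁻¹ * D) := by ring
    _ = _ := by
        congr 1
        · rw [hterm ys]
        · rw [hSsum, Finset.sum_mul]
          exact Finset.sum_congr rfl fun ys' _ => (hterm ys').symm

end NoisyFeedback
end

section
/- In the channel model, define the dynamic-programming value functions: V_{n+1}(σ, u, w) := Σ_{(π,η)} σ(π,η) · (1 − max_{w̃} π(w̃)), and for t = n down to 1, V_t(σ, u, w) := min over φ ∈ (𝒲 × 𝒰 → 𝒳) of Σ_{y,z} Q^f(y | φ(w,u)) · Q^b(z | y) · V_{t+1}(G¹(σ, φ, z, u, w), G²(u, φ, z, w), w) (the minimum over the finite set of such functions). Then for every choice of Markov encoding functions φ_1,…,φ_n : 𝒲 × 𝒰 → 𝒳, the error probability of the resulting scheme with MAP decoding satisfies P_e(φ) = E[1 − max_w P(W = w | Y_{1:n})] ≥ (1/|𝒲|) Σ_w V_1(σ₀, u₁, w), where σ₀ is the point mass at (uniform on 𝒲, w ↦ point mass at u₁). -/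
/-!
The beliefs `(Π_t, H_t)` computed by `F` are the true posteriors: `Π_t = P(W = · | Y_{1:t})` and
`P(W = w | Y_{1:t}) H_t(w) = P(W = w, U_{t+1} = · | Y_{1:t})`, so the MAP error is `E[1 - max Π_n]`.
Given `W` and `Z_{1:t}`, the sender's belief `σ_t` on `(Π_t, H_t)` evolves by `G¹`. Since `V_t` is
positively homogeneous in `σ`, it may be evaluated on unnormalized beliefs, and taking `φ = φ_t` in
the minimum defining `V_t` shows that `E[V_{t+1}(σ_t, U_{t+1}, W)]` is nondecreasing in `t`: it
starts at `(1/|𝒲|) Σ_w V_1(σ₀, u₁, w)` and ends at `E[1 - max Π_n]`.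
-/

open scoped ENNReal Classical
open Finset

namespace NoisyFeedback

variable {W X Y Z U : Type*}

variable [Fintype W] [Fintype X] [Fintype Y] [Fintype Z] [Fintype U]

/-- Belief states of the receiver: a belief `π` on the message together with, for each
message `w`, a belief `η w` on the sender's memory. -/
@[reducible] def Belief (W U : Type*) : Type _ := (W → ℝ≥0∞) × (W → U → ℝ≥0∞)

/-- Update map `F¹` of the receiver's belief on the message. -/
noncomputable def F1 (Qf : X → PMF Y) (p : Belief W U) (φ : W × U → X) (y : Y) :
    W → ℝ≥0∞ := fun w =>
  p.1 w * (∑ u : U, p.2 w u * Qf (φ (w, u)) y) /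
    ∑ w' : W, p.1 w' * ∑ u : U, p.2 w' u * Qf (φ (w', u)) y

/-- Update map `F²` of the receiver's conditional belief on the sender's memory. -/
noncomputable def F2 (Qf : X → PMF Y) (Qb : Y → PMF Z)
    (G2 : U → (W × U → X) → Z → W → U) (p : Belief W U) (φ : W × U → X) (y : Y) :
    W → U → ℝ≥0∞ := fun w u' =>
  (∑ u : U, ∑ z : Z,
      p.2 w u * Qf (φ (w, u)) y * Qb y z * (if u' = G2 u φ z w then 1 else 0)) /
    ∑ u : U, p.2 w u * Qf (φ (w, u)) y

/-- Combined belief update `F = (F¹, F²)`. -/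
noncomputable def Fb (Qf : X → PMF Y) (Qb : Y → PMF Z)
    (G2 : U → (W × U → X) → Z → W → U) (p : Belief W U) (φ : W × U → X) (y : Y) :
    Belief W U :=
  (F1 Qf p φ y, F2 Qf Qb G2 p φ y)

/-- Sender belief update `G¹`: update of the sender's belief `σ` over receiver belief
states upon transmitting with encoding function `φ` (with memory `u`, message `w`)
and receiving feedback `z`. -/
noncomputable def G1 (Qf : X → PMF Y) (Qb : Y → PMF Z)
    (G2 : U → (W × U → X) → Z → W → U) (σ : Belief W U → ℝ≥0∞)
    (φ : W × U → X) (z : Z) (u : U) (w : W) : Belief W U → ℝ≥0∞ := fun b =>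
  (∑' p : Belief W U, σ p * ∑ y : Y,
      Qf (φ (w, u)) y * Qb y z * (if b = Fb Qf Qb G2 p φ y then 1 else 0)) /
    ∑ y : Y, Qf (φ (w, u)) y * Qb y z

/-- Initial belief state: uniform on the messages, point mass at `u1` on the memory. -/
noncomputable def b0 [Fintype W] (u1 : U) : Belief W U :=
  (fun _ => (Fintype.card W : ℝ≥0∞)⁻¹, fun _ u => if u = u1 then 1 else 0)

/-- Initial sender belief: point mass at the initial belief state `b0`. -/
noncomputable def σ0 [Fintype W] (u1 : U) : Belief W U → ℝ≥0∞ := fun b =>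
  if b = b0 u1 then 1 else 0

/-- The receiver belief process `(Π_t, H_t)` as a function of the channel outputs,
under the Markov encoders `φ`. -/
noncomputable def beliefs (Qf : X → PMF Y) (Qb : Y → PMF Z)
    (G2 : U → (W × U → X) → Z → W → U) (u1 : U) (φ : ℕ → W × U → X) :
    (t : ℕ) → (Fin t → Y) → Belief W U
  | 0, _ => b0 u1
  | t + 1, ys =>
      Fb Qf Qb G2 (beliefs Qf Qb G2 u1 φ t (Fin.init ys)) (φ t) (ys (Fin.last t))

/-- Dynamic-programming value functions, indexed by the number `k` of remaining
transmissions: `Vk k = V_{n+1-k}` of the paper, so `Vk 0 = V_{n+1}` is the terminal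
cost `Σ_{(π,η)} σ(π,η) (1 - max_w̃ π(w̃))`, and each step minimizes over the (finitely
many) encoding functions `φ : 𝒲 × 𝒰 → 𝒳`. -/
noncomputable def Vk (Qf : X → PMF Y) (Qb : Y → PMF Z)
    (G2 : U → (W × U → X) → Z → W → U) :
    ℕ → (Belief W U → ℝ≥0∞) → U → W → ℝ≥0∞
  | 0, σ, _, _ => ∑' p : Belief W U, σ p * (1 - univ.sup fun w' : W => p.1 w')
  | k + 1, σ, u, w =>
      ⨅ φ : W × U → X,
        ∑ y : Y, ∑ z : Z,
          Qf (φ (w, u)) y * Qb y z *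
            Vk Qf Qb G2 k (G1 Qf Qb G2 σ φ z u w) (G2 u φ z w) w

end NoisyFeedback

lemma Fin.sum_fun_succ {α M : Type*} [Fintype α] [AddCommMonoid M] {t : ℕ}
    (g : (Fin (t + 1) → α) → M) :
    ∑ f, g f = ∑ f : Fin t → α, ∑ a : α, g (Fin.snoc f a) := by
  rw [← (Fin.snocEquiv fun _ => α).sum_comp, Fintype.sum_prod_type, Finset.sum_comm]
  rfl

lemma PMF.sum_coe_eq_one {α : Type*} [Fintype α] (p : PMF α) : ∑ a, p a = 1 := by
  simpa only [tsum_fintype] using p.tsum_coe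

lemma PMF.sum_mul_le_one {α : Type*} [Fintype α] (p : PMF α) {f : α → ℝ≥0∞}
    (hf : ∀ a, f a ≤ 1) : ∑ a, p a * f a ≤ 1 :=
  calc ∑ a, p a * f a ≤ ∑ a, p a :=
        Finset.sum_le_sum fun a _ => mul_le_of_le_one_right zero_le (hf a)
    _ = 1 := p.sum_coe_eq_one

lemma ENNReal.div_div_div_cancel_right {a b c : ℝ≥0∞} (hc0 : c ≠ 0) (hc : c ≠ ⊤) :
    a / c / (b / c) = a / b := by
  simp only [div_eq_mul_inv a, div_eq_mul_inv b]
  exact ENNReal.mul_div_mul_right a b (ENNReal.inv_ne_zero.2 hc) (ENNReal.inv_ne_top.2 hc0)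

lemma ENNReal.mul_mul_div_cancel_of_le {a b c : ℝ≥0∞} (hcb : c ≤ b) (hab : a * b ≠ ⊤) :
    a * b * (c / b) = a * c := by
  rcases eq_or_ne a 0 with rfl | ha
  · simp
  have hb : b ≠ ⊤ := fun hb => hab (by simp [hb, ha])
  rw [mul_assoc, ENNReal.mul_div_cancel' (fun hb0 => le_zero_iff.1 (hb0 ▸ hcb)) (absurd · hb)]

lemma ENNReal.mul_one_sub_sup_div {ι : Type*} (s : Finset ι) (f : ι → ℝ≥0∞) {a : ℝ≥0∞}
    (ha : a ≠ ⊤) : a * (1 - s.sup fun i => f i / a) = a - s.sup f := by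
  rcases eq_or_ne a 0 with rfl | ha0
  · simp
  simp only [div_eq_mul_inv]
  rw [← Finset.sup_mul₀, ENNReal.mul_sub (fun _ _ => ha), mul_one, ← div_eq_mul_inv,
    ENNReal.mul_div_cancel ha0 ha]

namespace NoisyFeedback

variable {W X Y Z U : Type*}

section

variable {Qf : X → PMF Y} {Qb : Y → PMF Z} {G2 : U → (W × U → X) → Z → W → U} {u1 : U}
  {φ : ℕ → W × U → X}

lemma mem_snoc {t : ℕ} (w : W) (zs : Fin t → Z) (z : Z) :
    mem G2 u1 φ w (t + 1) (Fin.snoc zs z) = G2 (mem G2 u1 φ w t zs) (φ t) z w := by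
  simp [mem]

variable [Fintype W]

lemma jointP_zero (w : W) (ys : Fin 0 → Y) (zs : Fin 0 → Z) :
    jointP Qf Qb G2 u1 φ 0 w ys zs = (Fintype.card W : ℝ≥0∞)⁻¹ := by
  simp [jointP]

lemma jointP_snoc {t : ℕ} (w : W) (ys : Fin t → Y) (y : Y) (zs : Fin t → Z) (z : Z) :
    jointP Qf Qb G2 u1 φ (t + 1) w (Fin.snoc ys y) (Fin.snoc zs z) =
      jointP Qf Qb G2 u1 φ t w ys zs * (Qf (φ t (w, mem G2 u1 φ w t zs)) y * Qb y z) := by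
  simp only [jointP, Fin.prod_univ_castSucc, mul_assoc, Fin.snoc_castSucc, Fin.snoc_last,
    Fin.val_castSucc, Fin.val_last]
  have key : ∀ (m : ℕ) (h : m ≤ t + 1) (h' : m ≤ t) (j : Fin m),
      (Fin.snoc zs z : Fin (t + 1) → Z) (Fin.castLE h j) = zs (Fin.castLE h' j) :=
    fun _ _ h' j => Fin.snoc_castSucc (α := fun _ => Z) z zs (Fin.castLE h' j)
  congr!
  · exact key _ _ (Fin.is_lt _).le _
  · exact key _ _ le_rfl _

variable [Fintype Z]

lemma probWY_zero (ys : Fin 0 → Y) (w : W) :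
    probWY Qf Qb G2 u1 φ 0 ys w = (Fintype.card W : ℝ≥0∞)⁻¹ := by
  simp [probWY, jointP_zero]

lemma probY_eq_sum_probWY {t : ℕ} (ys : Fin t → Y) :
    probY Qf Qb G2 u1 φ t ys = ∑ w, probWY Qf Qb G2 u1 φ t ys w := rfl

lemma probY_zero [Nonempty W] (ys : Fin 0 → Y) : probY Qf Qb G2 u1 φ 0 ys = 1 := by
  simp [probY_eq_sum_probWY, probWY_zero, ENNReal.mul_inv_cancel]

variable [Fintype U]

lemma beliefs_snoc {t : ℕ} (ys : Fin t → Y) (y : Y) :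
    beliefs Qf Qb G2 u1 φ (t + 1) (Fin.snoc ys y) =
      Fb Qf Qb G2 (beliefs Qf Qb G2 u1 φ t ys) (φ t) y := by
  simp [beliefs]

lemma sum_probWUY_mul {t : ℕ} (ys : Fin t → Y) (w : W) (h : U → ℝ≥0∞) :
    ∑ u, probWUY Qf Qb G2 u1 φ t ys w u * h u =
      ∑ zs, jointP Qf Qb G2 u1 φ t w ys zs * h (mem G2 u1 φ w t zs) := by
  simp only [probWUY, Finset.sum_mul, ite_mul, zero_mul]
  rw [Finset.sum_comm]
  simp

lemma sum_probWUY {t : ℕ} (ys : Fin t → Y) (w : W) :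
    ∑ u, probWUY Qf Qb G2 u1 φ t ys w u = probWY Qf Qb G2 u1 φ t ys w := by
  simp only [probWUY, probWY]
  rw [Finset.sum_comm]
  simp

lemma probWY_snoc {t : ℕ} (ys : Fin t → Y) (y : Y) (w : W) :
    probWY Qf Qb G2 u1 φ (t + 1) (Fin.snoc ys y) w =
      ∑ u, probWUY Qf Qb G2 u1 φ t ys w u * Qf (φ t (w, u)) y := by
  rw [sum_probWUY_mul, probWY, Fin.sum_fun_succ]
  refine Finset.sum_congr rfl fun zs _ => ?_
  simp only [jointP_snoc, ← mul_assoc, ← Finset.mul_sum, PMF.sum_coe_eq_one, mul_one]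

lemma probWUY_snoc {t : ℕ} (ys : Fin t → Y) (y : Y) (w : W) (u' : U) :
    probWUY Qf Qb G2 u1 φ (t + 1) (Fin.snoc ys y) w u' =
      ∑ u, ∑ z, probWUY Qf Qb G2 u1 φ t ys w u * Qf (φ t (w, u)) y * Qb y z *
        (if u' = G2 u (φ t) z w then 1 else 0) := by
  simp_rw [mul_assoc, ← Finset.mul_sum]
  rw [sum_probWUY_mul, probWUY, Fin.sum_fun_succ]
  refine Finset.sum_congr rfl fun zs _ => ?_
  simp only [Finset.mul_sum]
  refine Finset.sum_congr rfl fun z _ => ?_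
  rw [mem_snoc, jointP_snoc]
  split_ifs <;> simp_all [eq_comm]

lemma probWY_snoc_le {t : ℕ} (ys : Fin t → Y) (y : Y) (w : W) :
    probWY Qf Qb G2 u1 φ (t + 1) (Fin.snoc ys y) w ≤ probWY Qf Qb G2 u1 φ t ys w := by
  rw [probWY_snoc, ← sum_probWUY]
  exact Finset.sum_le_sum fun u _ => mul_le_of_le_one_right zero_le (PMF.coe_le_one _ _)

lemma probWY_le_inv_card : ∀ {t : ℕ} (ys : Fin t → Y) (w : W),
    probWY Qf Qb G2 u1 φ t ys w ≤ (Fintype.card W : ℝ≥0∞)⁻¹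
  | 0, ys, w => (probWY_zero ys w).le
  | _ + 1, ys, w => Fin.snocCases (fun ys y => (probWY_snoc_le ys y w).trans
      (probWY_le_inv_card ys w)) ys

lemma probWY_ne_top {t : ℕ} (ys : Fin t → Y) (w : W) : probWY Qf Qb G2 u1 φ t ys w ≠ ⊤ :=
  have : Nonempty W := ⟨w⟩
  ne_top_of_le_ne_top (by simp) (probWY_le_inv_card ys w)

lemma probY_ne_top {t : ℕ} (ys : Fin t → Y) : probY Qf Qb G2 u1 φ t ys ≠ ⊤ :=
  ENNReal.sum_ne_top.2 fun w _ => probWY_ne_top ys w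

lemma probY_snoc_le {t : ℕ} (ys : Fin t → Y) (y : Y) :
    probY Qf Qb G2 u1 φ (t + 1) (Fin.snoc ys y) ≤ probY Qf Qb G2 u1 φ t ys :=
  Finset.sum_le_sum fun w _ => probWY_snoc_le ys y w

lemma probWY_snoc_of_cond {t : ℕ} {ys : Fin t → Y} {w : W} {η : U → ℝ≥0∞}
    (hη : ∀ u, probWY Qf Qb G2 u1 φ t ys w * η u = probWUY Qf Qb G2 u1 φ t ys w u) (y : Y) :
    probWY Qf Qb G2 u1 φ (t + 1) (Fin.snoc ys y) w =
      probWY Qf Qb G2 u1 φ t ys w * ∑ u, η u * Qf (φ t (w, u)) y := by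
  simp only [probWY_snoc, Finset.mul_sum, ← mul_assoc, hη]

-- Multiplied out, since `H_t(w)` is arbitrary where `P(W = w, Y_{1:t}) = 0`.
lemma probWY_mul_beliefs_snd : ∀ {t : ℕ} (ys : Fin t → Y) (w : W) (u : U),
    probWY Qf Qb G2 u1 φ t ys w * (beliefs Qf Qb G2 u1 φ t ys).2 w u =
      probWUY Qf Qb G2 u1 φ t ys w u
  | 0, ys, w, u => by
    by_cases h : u = u1 <;>
      simp [probWY_zero, probWUY, jointP_zero, beliefs, b0, mem, h, eq_comm]
  | t + 1, ys, w, u' => by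
    induction ys using Fin.snocCases with | _ ys y => ?_
    set η := (beliefs Qf Qb G2 u1 φ t ys).2 w
    set num := ∑ u, ∑ z, η u * Qf (φ t (w, u)) y * Qb y z *
      (if u' = G2 u (φ t) z w then 1 else 0)
    have hnum : probWY Qf Qb G2 u1 φ t ys w * num =
        probWUY Qf Qb G2 u1 φ (t + 1) (Fin.snoc ys y) w u' := by
      simp only [probWUY_snoc, num, Finset.mul_sum, ← mul_assoc, η, probWY_mul_beliefs_snd]
    have hnum_le : num ≤ ∑ u, η u * Qf (φ t (w, u)) y := by
      refine Finset.sum_le_sum fun u _ => ?_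
      simp only [mul_assoc, ← Finset.mul_sum]
      rw [← mul_assoc]
      exact mul_le_of_le_one_right zero_le <|
        (Qb y).sum_mul_le_one fun z => by split_ifs <;> simp
    have hA := probWY_snoc_of_cond (fun u => probWY_mul_beliefs_snd ys w u) y
    rw [beliefs_snoc, hA]
    show _ * _ * (num / _) = _
    rw [ENNReal.mul_mul_div_cancel_of_le hnum_le (hA ▸ probWY_ne_top _ w), hnum]

lemma beliefs_fst_eq : ∀ {t : ℕ} {ys : Fin t → Y}, 0 < probY Qf Qb G2 u1 φ t ys → ∀ w : W,
    (beliefs Qf Qb G2 u1 φ t ys).1 w =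
      probWY Qf Qb G2 u1 φ t ys w / probY Qf Qb G2 u1 φ t ys
  | 0, ys, _, w => by
    have : Nonempty W := ⟨w⟩
    simp [probY_zero, probWY_zero, beliefs, b0]
  | t + 1, ys, hpos, w => by
    induction ys using Fin.snocCases with | _ ys y => ?_
    have hpos' := hpos.trans_le (probY_snoc_le ys y)
    have hterm : ∀ w', (beliefs Qf Qb G2 u1 φ t ys).1 w' *
        ∑ u, (beliefs Qf Qb G2 u1 φ t ys).2 w' u * Qf (φ t (w', u)) y =
          probWY Qf Qb G2 u1 φ (t + 1) (Fin.snoc ys y) w' / probY Qf Qb G2 u1 φ t ys := by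
      intro w'
      rw [beliefs_fst_eq hpos' w', ← ENNReal.mul_div_right_comm,
        ← probWY_snoc_of_cond (probWY_mul_beliefs_snd ys w') y]
    have hsum : ∑ w', probWY Qf Qb G2 u1 φ (t + 1) (Fin.snoc ys y) w' /
        probY Qf Qb G2 u1 φ t ys =
          probY Qf Qb G2 u1 φ (t + 1) (Fin.snoc ys y) / probY Qf Qb G2 u1 φ t ys := by
      simp only [div_eq_mul_inv, ← Finset.sum_mul, probY_eq_sum_probWY]
    rw [beliefs_snoc]
    simp only [Fb, F1, hterm, hsum]
    exact ENNReal.div_div_div_cancel_right hpos'.ne' (probY_ne_top ys)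

lemma probY_mul_one_sub_sup_posterior {t : ℕ} (ys : Fin t → Y) :
    probY Qf Qb G2 u1 φ t ys *
        (1 - univ.sup fun w => probWY Qf Qb G2 u1 φ t ys w / probY Qf Qb G2 u1 φ t ys) =
      probY Qf Qb G2 u1 φ t ys - univ.sup fun w => probWY Qf Qb G2 u1 φ t ys w :=
  ENNReal.mul_one_sub_sup_div _ _ (probY_ne_top ys)

lemma probY_mul_one_sub_sup_beliefs {t : ℕ} (ys : Fin t → Y) :
    probY Qf Qb G2 u1 φ t ys * (1 - univ.sup fun w => (beliefs Qf Qb G2 u1 φ t ys).1 w) =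
      probY Qf Qb G2 u1 φ t ys - univ.sup fun w => probWY Qf Qb G2 u1 φ t ys w := by
  rcases eq_zero_or_pos (probY Qf Qb G2 u1 φ t ys) with h | h
  · simp [h]
  · simp only [beliefs_fst_eq h, probY_mul_one_sub_sup_posterior]

variable [Fintype Y]

lemma sum_filter_probY_pos_mul_one_sub_sup {t : ℕ} :
    ∑ ys ∈ univ.filter (fun ys : Fin t → Y => 0 < probY Qf Qb G2 u1 φ t ys),
        probY Qf Qb G2 u1 φ t ys *
          (1 - univ.sup fun w => probWY Qf Qb G2 u1 φ t ys w / probY Qf Qb G2 u1 φ t ys) =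
      ∑ ys, (probY Qf Qb G2 u1 φ t ys - univ.sup fun w => probWY Qf Qb G2 u1 φ t ys w) := by
  rw [Finset.sum_filter_of_ne fun ys _ h => pos_iff_ne_zero.2 (left_ne_zero_of_mul h)]
  exact Finset.sum_congr rfl fun ys _ => probY_mul_one_sub_sup_posterior ys

lemma map_error_eq {t : ℕ} {gMAP : (Fin t → Y) → W}
    (hMAP : ∀ ys w, probWY Qf Qb G2 u1 φ t ys w ≤ probWY Qf Qb G2 u1 φ t ys (gMAP ys)) :
    ∑ w, ∑ ys, ∑ zs, (if gMAP ys ≠ w then jointP Qf Qb G2 u1 φ t w ys zs else 0) =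
      ∑ ys, (probY Qf Qb G2 u1 φ t ys - univ.sup fun w => probWY Qf Qb G2 u1 φ t ys w) := by
  rw [Finset.sum_comm]
  refine Finset.sum_congr rfl fun ys _ => ?_
  have hsup : (univ.sup fun w => probWY Qf Qb G2 u1 φ t ys w) =
      probWY Qf Qb G2 u1 φ t ys (gMAP ys) :=
    le_antisymm (Finset.sup_le fun w _ => hMAP ys w) (Finset.le_sup (mem_univ _))
  rw [hsup]
  calc ∑ w, ∑ zs, (if gMAP ys ≠ w then jointP Qf Qb G2 u1 φ t w ys zs else 0)
      = ∑ w ∈ univ.erase (gMAP ys), probWY Qf Qb G2 u1 φ t ys w := by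
        simp only [Finset.sum_ite_irrel, Finset.sum_const_zero, ← Finset.sum_filter,
          Finset.filter_ne, probWY]
    _ = _ := ENNReal.eq_sub_of_add_eq (probWY_ne_top ys _)
        (Finset.sum_erase_add _ _ (mem_univ _))

variable (Qf Qb G2 u1 φ) in
/-- `senderBelief t w zs b = P(W = w, Z_{1:t} = zs, (Π_t, H_t) = b)`: the sender's belief on the
receiver's belief state, before normalization by `P(W = w, Z_{1:t} = zs)`. -/
noncomputable def senderBelief (t : ℕ) (w : W) (zs : Fin t → Z) : Belief W U → ℝ≥0∞ :=
  fun b => ∑ ys, if beliefs Qf Qb G2 u1 φ t ys = b then jointP Qf Qb G2 u1 φ t w ys zs else 0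

lemma tsum_senderBelief_mul {t : ℕ} (w : W) (zs : Fin t → Z) (g : Belief W U → ℝ≥0∞) :
    ∑' b, senderBelief Qf Qb G2 u1 φ t w zs b * g b =
      ∑ ys, jointP Qf Qb G2 u1 φ t w ys zs * g (beliefs Qf Qb G2 u1 φ t ys) := by
  simp only [senderBelief, Finset.sum_mul, ite_mul, zero_mul]
  rw [Summable.tsum_finsetSum fun _ _ => ENNReal.summable]
  simp

lemma senderBelief_zero (w : W) (zs : Fin 0 → Z) :
    senderBelief Qf Qb G2 u1 φ 0 w zs = (Fintype.card W : ℝ≥0∞)⁻¹ • σ0 u1 := by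
  funext b
  simp [senderBelief, σ0, jointP_zero, beliefs, eq_comm]

lemma G1_senderBelief {t : ℕ} (w : W) (zs : Fin t → Z) (z : Z) :
    G1 Qf Qb G2 (senderBelief Qf Qb G2 u1 φ t w zs) (φ t) z (mem G2 u1 φ w t zs) w =
      fun b => senderBelief Qf Qb G2 u1 φ (t + 1) w (Fin.snoc zs z) b /
        ∑ y, Qf (φ t (w, mem G2 u1 φ w t zs)) y * Qb y z := by
  funext b
  rw [G1, tsum_senderBelief_mul, senderBelief, Fin.sum_fun_succ]
  refine congrArg (· / _) (Finset.sum_congr rfl fun ys _ => ?_)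
  simp only [Finset.mul_sum, beliefs_snoc, jointP_snoc, mul_ite, mul_one, mul_zero, eq_comm]

lemma G1_const_smul (σ : Belief W U → ℝ≥0∞) (c : ℝ≥0∞) (φ' : W × U → X) (z : Z) (u : U)
    (w : W) : G1 Qf Qb G2 (c • σ) φ' z u w = c • G1 Qf Qb G2 σ φ' z u w := by
  funext b
  simp only [G1, Pi.smul_apply, smul_eq_mul, mul_assoc, ENNReal.tsum_mul_left, mul_div_assoc]

lemma Vk_const_smul {c : ℝ≥0∞} (hc0 : c ≠ 0) (hc : c ≠ ⊤) :
    ∀ (k : ℕ) (σ : Belief W U → ℝ≥0∞) (u : U) (w : W),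
      Vk Qf Qb G2 k (c • σ) u w = c * Vk Qf Qb G2 k σ u w
  | 0, σ, u, w => by
    simp only [Vk, Pi.smul_apply, smul_eq_mul, mul_assoc, ENNReal.tsum_mul_left]
  | k + 1, σ, u, w => by
    simp only [Vk, G1_const_smul, Vk_const_smul hc0 hc k, ENNReal.mul_iInf_of_ne hc0 hc,
      Finset.mul_sum, mul_left_comm c]

lemma mul_Vk_G1_senderBelief_le {k t : ℕ} (w : W) (zs : Fin t → Z) (z : Z) :
    (∑ y, Qf (φ t (w, mem G2 u1 φ w t zs)) y * Qb y z) *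
        Vk Qf Qb G2 k (G1 Qf Qb G2 (senderBelief Qf Qb G2 u1 φ t w zs) (φ t) z
          (mem G2 u1 φ w t zs) w) (G2 (mem G2 u1 φ w t zs) (φ t) z w) w ≤
      Vk Qf Qb G2 k (senderBelief Qf Qb G2 u1 φ (t + 1) w (Fin.snoc zs z))
        (mem G2 u1 φ w (t + 1) (Fin.snoc zs z)) w := by
  set D := ∑ y, Qf (φ t (w, mem G2 u1 φ w t zs)) y * Qb y z
  rcases eq_or_ne D 0 with hD0 | hD0
  · simp [hD0]
  have hD : D ≠ ⊤ := ne_top_of_le_ne_top ENNReal.one_ne_top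
    ((Qf _).sum_mul_le_one fun y => PMF.coe_le_one _ _)
  have hG1 : G1 Qf Qb G2 (senderBelief Qf Qb G2 u1 φ t w zs) (φ t) z (mem G2 u1 φ w t zs) w =
      D⁻¹ • senderBelief Qf Qb G2 u1 φ (t + 1) w (Fin.snoc zs z) := by
    rw [G1_senderBelief]
    funext b
    simp only [Pi.smul_apply, smul_eq_mul, div_eq_mul_inv, mul_comm, D]
  rw [hG1, mem_snoc, Vk_const_smul (ENNReal.inv_ne_zero.2 hD) (ENNReal.inv_ne_top.2 hD0),
    ← mul_assoc, ENNReal.mul_inv_cancel hD0 hD, one_mul]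

lemma Vk_senderBelief_le {k t : ℕ} (w : W) (zs : Fin t → Z) :
    Vk Qf Qb G2 (k + 1) (senderBelief Qf Qb G2 u1 φ t w zs) (mem G2 u1 φ w t zs) w ≤
      ∑ z, Vk Qf Qb G2 k (senderBelief Qf Qb G2 u1 φ (t + 1) w (Fin.snoc zs z))
        (mem G2 u1 φ w (t + 1) (Fin.snoc zs z)) w :=
  calc _ ≤ ∑ y, ∑ z, Qf (φ t (w, mem G2 u1 φ w t zs)) y * Qb y z *
          Vk Qf Qb G2 k (G1 Qf Qb G2 (senderBelief Qf Qb G2 u1 φ t w zs) (φ t) z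
            (mem G2 u1 φ w t zs) w) (G2 (mem G2 u1 φ w t zs) (φ t) z w) w :=
        iInf_le _ (φ t)
    _ = ∑ z, (∑ y, Qf (φ t (w, mem G2 u1 φ w t zs)) y * Qb y z) *
          Vk Qf Qb G2 k (G1 Qf Qb G2 (senderBelief Qf Qb G2 u1 φ t w zs) (φ t) z
            (mem G2 u1 φ w t zs) w) (G2 (mem G2 u1 φ w t zs) (φ t) z w) w := by
        rw [Finset.sum_comm]
        simp only [Finset.sum_mul]
    _ ≤ _ := Finset.sum_le_sum fun z _ => mul_Vk_G1_senderBelief_le w zs z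

variable (Qf Qb G2 u1 φ) in
/-- By homogeneity of `Vk`, this is `E[Vk k (σ_t, U_{t+1}, W); W = w]` for the normalized sender
belief `σ_t`. -/
noncomputable def valueToGo (k t : ℕ) (w : W) : ℝ≥0∞ :=
  ∑ zs : Fin t → Z, Vk Qf Qb G2 k (senderBelief Qf Qb G2 u1 φ t w zs) (mem G2 u1 φ w t zs) w

lemma valueToGo_succ_le (k t : ℕ) (w : W) :
    valueToGo Qf Qb G2 u1 φ (k + 1) t w ≤ valueToGo Qf Qb G2 u1 φ k (t + 1) w := by
  rw [valueToGo, valueToGo, Fin.sum_fun_succ]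
  exact Finset.sum_le_sum fun zs _ => Vk_senderBelief_le w zs

lemma valueToGo_le_valueToGo_zero (w : W) : ∀ k t : ℕ,
    valueToGo Qf Qb G2 u1 φ k t w ≤ valueToGo Qf Qb G2 u1 φ 0 (t + k) w
  | 0, _ => le_rfl
  | k + 1, t => by
    rw [← Nat.add_assoc, Nat.add_right_comm]
    exact (valueToGo_succ_le k t w).trans (valueToGo_le_valueToGo_zero w k (t + 1))

lemma valueToGo_start (k : ℕ) (w : W) :
    valueToGo Qf Qb G2 u1 φ k 0 w =
      (Fintype.card W : ℝ≥0∞)⁻¹ * Vk Qf Qb G2 k (σ0 u1) u1 w := by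
  have : Nonempty W := ⟨w⟩
  rw [valueToGo, Fintype.sum_unique, senderBelief_zero,
    Vk_const_smul (ENNReal.inv_ne_zero.2 (ENNReal.natCast_ne_top _)) (by simp)]
  rfl

lemma sum_valueToGo_end (t : ℕ) :
    ∑ w, valueToGo Qf Qb G2 u1 φ 0 t w =
      ∑ ys, probY Qf Qb G2 u1 φ t ys *
        (1 - univ.sup fun w => (beliefs Qf Qb G2 u1 φ t ys).1 w) :=
  calc _ = ∑ w, ∑ zs : Fin t → Z, ∑ ys, jointP Qf Qb G2 u1 φ t w ys zs *
          (1 - univ.sup fun w => (beliefs Qf Qb G2 u1 φ t ys).1 w) := by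
        simp only [valueToGo, Vk, tsum_senderBelief_mul]
    _ = ∑ ys, ∑ w, ∑ zs : Fin t → Z, jointP Qf Qb G2 u1 φ t w ys zs *
          (1 - univ.sup fun w => (beliefs Qf Qb G2 u1 φ t ys).1 w) :=
        (Finset.sum_congr rfl fun _ _ => Finset.sum_comm).trans Finset.sum_comm
    _ = _ := by simp only [probY, Finset.sum_mul]

end

variable [Fintype W] [Fintype X] [Fintype Y] [Fintype Z] [Fintype U]

theorem dp_lower_bound_general
    (Qf : X → PMF Y) (Qb : Y → PMF Z)
    (G2 : U → (W × U → X) → Z → W → U) (u1 : U) (φ : ℕ → W × U → X) (n : ℕ)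
    (gMAP : (Fin n → Y) → W)
    (hMAP : ∀ (ys : Fin n → Y) (w : W),
      probWY Qf Qb G2 u1 φ n ys w ≤ probWY Qf Qb G2 u1 φ n ys (gMAP ys)) :
    (∑ w : W, ∑ ys : Fin n → Y, ∑ zs : Fin n → Z,
        if gMAP ys ≠ w then jointP Qf Qb G2 u1 φ n w ys zs else 0) =
      (∑ ys ∈ univ.filter (fun ys : Fin n → Y => 0 < probY Qf Qb G2 u1 φ n ys),
        probY Qf Qb G2 u1 φ n ys *
          (1 - univ.sup fun w : W =>
            probWY Qf Qb G2 u1 φ n ys w / probY Qf Qb G2 u1 φ n ys)) ∧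
    (Fintype.card W : ℝ≥0∞)⁻¹ * (∑ w : W, Vk Qf Qb G2 n (σ0 u1) u1 w) ≤
      ∑ ys ∈ univ.filter (fun ys : Fin n → Y => 0 < probY Qf Qb G2 u1 φ n ys),
        probY Qf Qb G2 u1 φ n ys *
          (1 - univ.sup fun w : W =>
            probWY Qf Qb G2 u1 φ n ys w / probY Qf Qb G2 u1 φ n ys) := by
  rw [sum_filter_probY_pos_mul_one_sub_sup]
  refine ⟨map_error_eq hMAP, ?_⟩
  calc (Fintype.card W : ℝ≥0∞)⁻¹ * ∑ w, Vk Qf Qb G2 n (σ0 u1) u1 w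
      = ∑ w, valueToGo Qf Qb G2 u1 φ n 0 w := by simp only [Finset.mul_sum, valueToGo_start]
    _ ≤ ∑ w, valueToGo Qf Qb G2 u1 φ 0 n w := Finset.sum_le_sum fun w _ => by
        simpa only [Nat.zero_add] using valueToGo_le_valueToGo_zero w n 0
    _ = ∑ ys, probY Qf Qb G2 u1 φ n ys *
          (1 - univ.sup fun w => (beliefs Qf Qb G2 u1 φ n ys).1 w) := sum_valueToGo_end n
    _ = _ := Finset.sum_congr rfl fun ys _ => probY_mul_one_sub_sup_beliefs ys

/-- **Dynamic-programming lower bound on the error probability of any Markov encoder**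
(Statement 8).  For every choice of Markov encoding functions `φ_1, …, φ_n`, the error
probability with MAP decoding equals `E[1 - max_w P(W = w | Y_{1:n})]` and is at least
`(1/|𝒲|) Σ_w V_1(σ₀, u₁, w)`, where `V_1 = Vk n` and `σ₀` is the point mass at
(uniform on `𝒲`, `w ↦` point mass at `u₁`). -/
theorem dp_lower_bound [Nonempty W] [Nonempty X] [Nonempty Y] [Nonempty Z] [Nonempty U]
    (Qf : X → PMF Y) (Qb : Y → PMF Z)
    (G2 : U → (W × U → X) → Z → W → U) (u1 : U) (φ : ℕ → W × U → X) (n : ℕ)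
    (gMAP : (Fin n → Y) → W)
    (hMAP : ∀ (ys : Fin n → Y) (w : W),
      probWY Qf Qb G2 u1 φ n ys w ≤ probWY Qf Qb G2 u1 φ n ys (gMAP ys)) :
    (∑ w : W, ∑ ys : Fin n → Y, ∑ zs : Fin n → Z,
        if gMAP ys ≠ w then jointP Qf Qb G2 u1 φ n w ys zs else 0) =
      (∑ ys ∈ univ.filter (fun ys : Fin n → Y => 0 < probY Qf Qb G2 u1 φ n ys),
        probY Qf Qb G2 u1 φ n ys *
          (1 - univ.sup fun w : W =>
            probWY Qf Qb G2 u1 φ n ys w / probY Qf Qb G2 u1 φ n ys)) ∧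
    (Fintype.card W : ℝ≥0∞)⁻¹ * (∑ w : W, Vk Qf Qb G2 n (σ0 u1) u1 w) ≤
      ∑ ys ∈ univ.filter (fun ys : Fin n → Y => 0 < probY Qf Qb G2 u1 φ n ys),
        probY Qf Qb G2 u1 φ n ys *
          (1 - univ.sup fun w : W =>
            probWY Qf Qb G2 u1 φ n ys w / probY Qf Qb G2 u1 φ n ys) :=
  dp_lower_bound_general Qf Qb G2 u1 φ n gMAP hMAP

end NoisyFeedback
end
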